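/- arXiv:2105.10752 — 5 statements merged into one kernel-verified Lean document; each statement's English description precedes it below -/
import Mathlib

section
/- Let F(m,n) = ((m+n-1)^2 - (m+n-1) % 2)/4 + min(m,n) on positive integers. If x₁ ≥ y₁ ≥ 1, x₂ ≥ y₂ ≥ 1, and x₁ + y₁ < x₂ + y₂, then F(x₁,y₁) < F(x₂,y₂). -/
def F (m n : ℕ) : ℕ := ((m + n - 1)^2 - (m + n - 1) % 2) / 4 + min m n

/-- closed form for the quadratic part -/
lemma fform (t : ℕ) : (t^2 - t % 2) / 4 = (t/2)^2 + (t % 2) * (t/2) := by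
  rcases Nat.even_or_odd' t with ⟨k, rfl | rfl⟩
  · have h : (2*k)^2 = 4 * k^2 := by ring
    have h2 : (2*k) % 2 = 0 := by omega
    have h3 : (2*k) / 2 = k := by omega
    rw [h, h2, h3, Nat.sub_zero, Nat.mul_div_cancel_left _ (by norm_num)]
    simp
  · have h : (2*k+1)^2 - (2*k+1) % 2 = 4 * (k^2 + k) := by
      have : (2*k+1)^2 = 4*(k^2+k) + 1 := by ring
      omega
    have h3 : (2*k+1) / 2 = k := by omega
    have h4 : (2*k+1) % 2 = 1 := by omega
    rw [h, h3, h4, Nat.mul_div_cancel_left _ (by norm_num)]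
    ring

lemma gstep (t : ℕ) :
    (t/2)^2 + (t % 2) * (t/2) + (t+1)/2 < ((t+1)/2)^2 + ((t+1) % 2) * ((t+1)/2) + 1 := by
  rcases Nat.even_or_odd' t with ⟨k, rfl | rfl⟩
  · have h1 : (2*k)/2 = k := by omega
    have h2 : (2*k) % 2 = 0 := by omega
    have h3 : (2*k+1)/2 = k := by omega
    have h4 : (2*k+1) % 2 = 1 := by omega
    rw [h1, h2, h3, h4]
    nlinarith [sq_nonneg k]
  · have h1 : (2*k+1)/2 = k := by omega
    have h2 : (2*k+1) % 2 = 1 := by omega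
    have h3 : (2*k+1+1)/2 = k+1 := by omega
    have h4 : (2*k+1+1) % 2 = 0 := by omega
    rw [h1, h2, h3, h4]
    nlinarith [sq_nonneg k]

lemma gmono : Monotone (fun t : ℕ => (t/2)^2 + (t % 2) * (t/2)) := by
  apply monotone_nat_of_le_succ
  intro t
  rcases Nat.even_or_odd' t with ⟨k, rfl | rfl⟩
  · have h1 : (2*k)/2 = k := by omega
    have h2 : (2*k) % 2 = 0 := by omega
    have h3 : (2*k+1)/2 = k := by omega
    have h4 : (2*k+1) % 2 = 1 := by omega
    simp only [h1, h2, h3, h4]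
    nlinarith
  · have h1 : (2*k+1)/2 = k := by omega
    have h2 : (2*k+1) % 2 = 1 := by omega
    have h3 : (2*k+1+1)/2 = k+1 := by omega
    have h4 : (2*k+1+1) % 2 = 0 := by omega
    simp only [h1, h2, h3, h4]
    nlinarith [sq_nonneg k]

theorem lemma4 (x₁ y₁ x₂ y₂ : ℕ) (h₁ : 1 ≤ y₁) (hx₁ : y₁ ≤ x₁)
    (h₂ : 1 ≤ y₂) (hx₂ : y₂ ≤ x₂) (hsum : x₁ + y₁ < x₂ + y₂) :
    F x₁ y₁ < F x₂ y₂ := by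
  unfold F
  rw [min_eq_right hx₁, min_eq_right hx₂, fform, fform]
  set t₁ := x₁ + y₁ - 1 with ht₁
  set t₂ := x₂ + y₂ - 1 with ht₂
  have hy₁ : y₁ ≤ (t₁ + 1)/2 := by omega
  have ht : t₁ + 1 ≤ t₂ := by omega
  calc (t₁/2)^2 + (t₁ % 2) * (t₁/2) + y₁
      ≤ (t₁/2)^2 + (t₁ % 2) * (t₁/2) + (t₁+1)/2 := by omega
    _ < ((t₁+1)/2)^2 + ((t₁+1) % 2) * ((t₁+1)/2) + 1 := gstep t₁
    _ ≤ (t₂/2)^2 + (t₂ % 2) * (t₂/2) + 1 := by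
        have := gmono ht
        simpa using Nat.add_le_add_right this 1
    _ ≤ (t₂/2)^2 + (t₂ % 2) * (t₂/2) + y₂ := by omega
end

section
/- Let F(m,n) = ((m+n-1)^2 - (m+n-1) % 2)/4 + min(m,n). The restriction of F to ordered pairs of positive integers (m,n) with m ≥ n is injective into the positive integers. -/
def g (k : ℕ) : ℕ := (k ^ 2 - k % 2) / 4

lemma gF (m n : ℕ) : F m n = g (m + n - 1) + min m n := rfl

lemma gstep_s6 (k : ℕ) : g (k + 1) = g k + (k + 1) / 2 := by
  unfold g
  rcases Nat.even_or_odd k with ⟨j, hj⟩ | ⟨j, hj⟩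
  · subst hj
    have h1 : (j + j) % 2 = 0 := by omega
    have h2 : (j + j + 1) % 2 = 1 := by omega
    have e1 : (j + j) ^ 2 = 4 * (j * j) := by ring
    have e2 : (j + j + 1) ^ 2 = 4 * (j * j + j) + 1 := by ring
    rw [h1, h2, e1, e2]
    have e3 : 4 * (j * j + j) + 1 - 1 = 4 * (j * j + j) := by omega
    rw [e3, Nat.sub_zero, Nat.mul_div_cancel_left _ (by norm_num),
      Nat.mul_div_cancel_left _ (by norm_num)]
    omega
  · subst hj
    have h1 : (2 * j + 1) % 2 = 1 := by omega
    have h2 : (2 * j + 1 + 1) % 2 = 0 := by omega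
    have e1 : (2 * j + 1) ^ 2 = 4 * (j * j + j) + 1 := by ring
    have e2 : (2 * j + 1 + 1) ^ 2 = 4 * (j * j + 2 * j + 1) := by ring
    rw [h1, h2, e1, e2]
    have e3 : 4 * (j * j + j) + 1 - 1 = 4 * (j * j + j) := by omega
    rw [e3, Nat.sub_zero, Nat.mul_div_cancel_left _ (by norm_num),
      Nat.mul_div_cancel_left _ (by norm_num)]
    omega

lemma gmono_s6 : Monotone g := by
  apply monotone_nat_of_le_succ
  intro k
  rw [gstep_s6]
  omega

theorem F_injOn :
    Set.InjOn (fun p : ℕ × ℕ => F p.1 p.2) {p | 1 ≤ p.2 ∧ p.2 ≤ p.1} ∧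
    Set.MapsTo (fun p : ℕ × ℕ => F p.1 p.2) {p | 1 ≤ p.2 ∧ p.2 ≤ p.1} {c | 1 ≤ c} := by
  constructor
  · rintro ⟨m, n⟩ ⟨h1, h2⟩ ⟨m', n'⟩ ⟨h1', h2'⟩ heq
    simp only at heq
    have key : ∀ a b a' b' : ℕ, 1 ≤ b → b ≤ a → 1 ≤ b' → b' ≤ a' →
        a + b < a' + b' → F a b < F a' b' := by
      intro a b a' b' hb hba hb' hba' hs
      have e1 : F a b = g (a + b - 1) + b := by rw [gF, min_eq_right hba]
      have e2 : F a' b' = g (a' + b' - 1) + b' := by rw [gF, min_eq_right hba']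
      rw [e1, e2]
      have step : g (a + b) = g (a + b - 1) + (a + b) / 2 := by
        have := gstep_s6 (a + b - 1)
        have h : a + b - 1 + 1 = a + b := by omega
        rwa [h] at this
      have hb2 : b ≤ (a + b) / 2 := by omega
      have hmono : g (a + b) ≤ g (a' + b' - 1) := gmono_s6 (by omega)
      omega
    rcases lt_trichotomy (m + n) (m' + n') with hlt | heq' | hgt
    · exact absurd heq (ne_of_lt (key m n m' n' h1 h2 h1' h2' hlt))
    · have e1 : F m n = g (m + n - 1) + n := by rw [gF, min_eq_right h2]
      have e2 : F m' n' = g (m' + n' - 1) + n' := by rw [gF, min_eq_right h2']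
      rw [e1, e2, heq'] at heq
      have : n = n' := by omega
      have : m = m' := by omega
      simp_all
    · exact absurd heq.symm (ne_of_lt (key m' n' m n h1' h2' h1 h2 hgt))
  · rintro ⟨m, n⟩ ⟨h1, h2⟩
    simp only [Set.mem_setOf_eq]
    rw [gF, min_eq_right h2]
    omega
end

section
/- Let F(m,n) = ((m+n-1)^2 - (m+n-1) % 2)/4 + min(m,n). The restriction of F to ordered pairs of positive integers (m,n) with m ≥ n is surjective onto the positive integers: for every positive integer C there exist positive integers m ≥ n with F(m,n) = C. -/
lemma F_diag (m n : ℕ) (h1 : 1 ≤ n) (h2 : n + 1 ≤ m - 1) :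
    F (m - 1) (n + 1) = F m n + 1 := by
  unfold F
  have h3 : m - 1 + (n + 1) = m + n := by omega
  rw [h3]
  have h4 : min (m-1) (n+1) = n + 1 := by omega
  have h5 : min m n = n := by omega
  omega

lemma F_nn (n : ℕ) (h : 1 ≤ n) : F n n = n * n := by
  obtain ⟨k, rfl⟩ : ∃ k, n = k + 1 := ⟨n - 1, by omega⟩
  unfold F
  have h1 : k + 1 + (k + 1) - 1 = 2 * k + 1 := by omega
  rw [h1]
  have h2 : (2 * k + 1)^2 = 4 * (k * k + k) + 1 := by ring
  rw [h2]
  have h5 : min (k+1) (k+1) = k + 1 := by omega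
  have : (k+1)*(k+1) = k*k + k + (k+1) := by ring
  omega

lemma F_2n1 (n : ℕ) (h : 1 ≤ n) : F (2 * n) 1 = n * n + 1 := by
  unfold F
  have h1 : 2 * n + 1 - 1 = 2 * n := by omega
  rw [h1]
  have h2 : (2 * n)^2 = 4 * (n * n) := by ring
  rw [h2]
  have h5 : min (2*n) 1 = 1 := by omega
  omega

lemma F_n1n (n : ℕ) (h : 1 ≤ n) : F (n + 1) n = n * n + n := by
  unfold F
  have h1 : n + 1 + n - 1 = 2 * n := by omega
  rw [h1]
  have h2 : (2 * n)^2 = 4 * (n * n) := by ring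
  rw [h2]
  have h5 : min (n+1) n = n := by omega
  omega

lemma F_2n11 (n : ℕ) : F (2 * n + 1) 1 = n * n + n + 1 := by
  unfold F
  have h1 : 2 * n + 1 + 1 - 1 = 2 * n + 1 := by omega
  rw [h1]
  have h2 : (2 * n + 1)^2 = 4 * (n * n + n) + 1 := by ring
  rw [h2]
  have h5 : min (2*n+1) 1 = 1 := by omega
  omega

theorem F_surj (C : ℕ) (hC : 1 ≤ C) : ∃ m n : ℕ, 1 ≤ n ∧ n ≤ m ∧ F m n = C := by
  induction C, hC using Nat.le_induction with
  | base => exact ⟨1, 1, le_refl 1, le_refl 1, by decide⟩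
  | succ C hC ih =>
    obtain ⟨m, n, hn, hnm, hF⟩ := ih
    by_cases hd : n + 1 ≤ m - 1
    · exact ⟨m - 1, n + 1, by omega, hd, by rw [F_diag m n hn hd, hF]⟩
    · -- m = n or m = n + 1
      have hcase : m = n ∨ m = n + 1 := by omega
      rcases hcase with hm | hm
      · subst hm
        refine ⟨2 * m, 1, le_refl 1, by omega, ?_⟩
        rw [F_2n1 m hn, ← hF, F_nn m hn]
      · subst hm
        refine ⟨2 * n + 1, 1, le_refl 1, by omega, ?_⟩
        rw [F_2n11 n, ← hF, F_n1n n hn]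
end

section
/- Let F(m,n) = ((m+n-1)^2 - (m+n-1) % 2)/4 + min(m,n) on positive integers. Given a positive integer C, let t = ⌊√C⌋, a = sgn(C - t²) ∈ {0,1}, and b = 1 if C - t² - t > 0 and 0 otherwise. Then m = (1-a)t + a[(t+1)(t+1+b) - C] and n = (1-a)t + a[C - t(t+b)] are positive integers satisfying m ≥ n and F(m,n) = C. -/
theorem inverse_formula (C : ℕ) (hC : 1 ≤ C) :
    let t : ℤ := (Nat.sqrt C : ℤ)
    let a : ℤ := Int.sign ((C : ℤ) - t^2)
    let b : ℤ := if (C : ℤ) - t^2 - t > 0 then 1 else 0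
    let m : ℤ := (1 - a) * t + a * ((t + 1) * (t + 1 + b) - C)
    let n : ℤ := (1 - a) * t + a * ((C : ℤ) - t * (t + b))
    1 ≤ n ∧ n ≤ m ∧ F m.toNat n.toNat = C := by
  intro t a b m n
  have hteq : t = (Nat.sqrt C : ℤ) := rfl
  have haeq : a = Int.sign ((C : ℤ) - t^2) := rfl
  have hbeq : b = (if (C : ℤ) - t^2 - t > 0 then 1 else 0) := rfl
  have hmeq : m = (1 - a) * t + a * ((t + 1) * (t + 1 + b) - C) := rfl
  have hneq : n = (1 - a) * t + a * ((C : ℤ) - t * (t + b)) := rfl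
  clear_value t a b m n
  set s := Nat.sqrt C with hs
  set S := s * s with hS
  have ht1 : S ≤ C := Nat.sqrt_le C
  have ht2 : C < S + 2 * s + 1 := by
    have := Nat.lt_succ_sqrt C
    rw [← hs] at this
    calc C < (s+1) * (s+1) := this
      _ = S + 2 * s + 1 := by rw [hS]; ring
  have ht0 : 1 ≤ s := Nat.sqrt_pos.mpr hC
  have htsq : t ^ 2 = (S : ℤ) := by rw [hteq, hS]; push_cast; ring
  by_cases h0 : C = S
  · -- a = 0, m = n = t
    have ha : a = 0 := by rw [haeq, htsq, h0]; simp
    have hm : m = (s : ℤ) := by rw [hmeq, ha, hteq]; ring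
    have hn : n = (s : ℤ) := by rw [hneq, ha, hteq]; ring
    obtain ⟨k, hk⟩ : ∃ k, s = k + 1 := ⟨s - 1, by omega⟩
    have hSk : S = k * k + 2 * k + 1 := by rw [hS, hk]; ring
    refine ⟨by omega, by omega, ?_⟩
    have hmt : m.toNat = s := by omega
    have hnt : n.toNat = s := by omega
    unfold F
    rw [hmt, hnt, hk]
    have : (k + 1) + (k + 1) - 1 = 2 * k + 1 := by omega
    rw [this, show (2 * k + 1)^2 = 4 * (k * k) + 4 * k + 1 from by ring]
    omega
  · have hpos : (0 : ℤ) < (C : ℤ) - t ^ 2 := by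
      rw [htsq]
      have : S < C := lt_of_le_of_ne ht1 (fun h => h0 h.symm)
      have h' : (S : ℤ) < C := by exact_mod_cast this
      linarith
    have ha : a = 1 := by rw [haeq]; exact Int.sign_eq_one_of_pos hpos
    have hSlt : S < C := lt_of_le_of_ne ht1 (fun h => h0 h.symm)
    by_cases hb1 : C ≤ S + s
    · -- b = 0
      have hb : b = 0 := by
        rw [hbeq, htsq, hteq, if_neg]
        push_neg
        have : (C : ℤ) ≤ (S : ℤ) + s := by exact_mod_cast hb1
        linarith
      have hm : m = (S : ℤ) + 2 * s + 1 - C := by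
        rw [hmeq, ha, hb, hteq, hS]; push_cast; ring
      have hn : n = (C : ℤ) - S := by
        rw [hneq, ha, hb, hteq, hS]; push_cast; ring
      refine ⟨by omega, by omega, ?_⟩
      have hmt : m.toNat = S + 2 * s + 1 - C := by omega
      have hnt : n.toNat = C - S := by omega
      unfold F
      rw [hmt, hnt]
      have h2 : (S + 2 * s + 1 - C) + (C - S) - 1 = 2 * s := by omega
      rw [h2, show (2 * s)^2 = 4 * (s * s) from by ring, ← hS]
      omega
    · -- b = 1
      have hb : b = 1 := by
        rw [hbeq, htsq, hteq, if_pos]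
        have : (S : ℤ) + s < C := by exact_mod_cast Nat.lt_of_not_le hb1
        linarith
      have hm : m = (S : ℤ) + 3 * s + 2 - C := by
        rw [hmeq, ha, hb, hteq, hS]; push_cast; ring
      have hn : n = (C : ℤ) - S - s := by
        rw [hneq, ha, hb, hteq, hS]; push_cast; ring
      have hb1' : S + s < C := Nat.lt_of_not_le hb1
      refine ⟨by omega, by omega, ?_⟩
      have hmt : m.toNat = S + 3 * s + 2 - C := by omega
      have hnt : n.toNat = C - S - s := by omega
      unfold F
      rw [hmt, hnt]
      have h2 : (S + 3 * s + 2 - C) + (C - S - s) - 1 = 2 * s + 1 := by omega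
      rw [h2, show (2 * s + 1)^2 = 4 * (s * s) + 4 * s + 1 from by ring, ← hS]
      omega
end

section
/- Define G(m,n) = ((m+n+1)^2 - (m+n+1) % 2)/4 + min(m,n) on natural numbers (including 0). Then G(m,n) = G(n,m) for all m, n, and the restriction of G to pairs (m,n) with m ≥ n is a bijection onto the natural numbers. -/
def G (m n : ℕ) : ℕ := ((m + n + 1)^2 - (m + n + 1) % 2) / 4 + min m n

def fv (s : ℕ) : ℕ := ((s + 1)^2 - (s + 1) % 2) / 4

lemma fv_eq (s : ℕ) : fv s = ((s+1)/2) * ((s+2)/2) := by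
  unfold fv
  rcases Nat.even_or_odd s with ⟨t, ht⟩ | ⟨t, ht⟩ <;> subst ht
  · have h1 : (t + t + 1)^2 = 4*(t*t) + 4*t + 1 := by ring
    have h2 : (t + t + 1) % 2 = 1 := by omega
    have h3 : (t + t + 1)^2 - (t + t + 1) % 2 = 4*(t*t + t) := by
      rw [h1, h2]; generalize t*t = u; omega
    rw [h3, Nat.mul_div_cancel_left _ (by norm_num : 0 < 4)]
    have h4 : (t + t + 1)/2 = t := by omega
    have h5 : (t + t + 1 + 1)/2 = t + 1 := by omega
    rw [h4, h5]; ring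
  · have h1 : (2*t + 1 + 1)^2 = 4*((t+1)*(t+1)) := by ring
    have h2 : (2*t + 1 + 1) % 2 = 0 := by omega
    have h3 : (2*t + 1 + 1)^2 - (2*t + 1 + 1) % 2 = 4*((t+1)*(t+1)) := by
      rw [h1, h2]; omega
    rw [h3, Nat.mul_div_cancel_left _ (by norm_num : 0 < 4)]
    have h4 : (2*t + 1 + 1)/2 = t + 1 := by omega
    have h5 : (2*t + 1 + 2)/2 = t + 1 := by omega
    rw [h4, h5]

lemma fv_succ (s : ℕ) : fv (s+1) = fv s + s/2 + 1 := by
  rw [fv_eq, fv_eq]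
  rcases Nat.even_or_odd s with ⟨t, ht⟩ | ⟨t, ht⟩ <;> subst ht
  · have e1 : (t + t + 1 + 1)/2 = t + 1 := by omega
    have e2 : (t + t + 1 + 2)/2 = t + 1 := by omega
    have e3 : (t + t + 1)/2 = t := by omega
    have e4 : (t + t + 2)/2 = t + 1 := by omega
    have e5 : (t + t)/2 = t := by omega
    rw [e1, e2, e3, e5]; ring
  · have e1 : (2*t + 1 + 1 + 1)/2 = t + 1 := by omega
    have e2 : (2*t + 1 + 1 + 2)/2 = t + 2 := by omega
    have e3 : (2*t + 1 + 1)/2 = t + 1 := by omega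
    have e4 : (2*t + 1 + 2)/2 = t + 1 := by omega
    have e5 : (2*t + 1)/2 = t := by omega
    rw [e1, e2, e3, e5]; ring

lemma fv_strictMono : StrictMono fv := by
  apply strictMono_nat_of_lt_succ
  intro s
  rw [fv_succ]; omega

lemma G_eq (m n : ℕ) (h : n ≤ m) : G m n = fv (m + n) + n := by
  unfold G fv
  rw [min_eq_right h]

lemma G_lt (m n : ℕ) (h : n ≤ m) : G m n < fv (m + n + 1) := by
  rw [G_eq m n h, fv_succ]
  omega

theorem G_symm_bij :
    (∀ m n : ℕ, G m n = G n m) ∧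
    Set.BijOn (fun p : ℕ × ℕ => G p.1 p.2) {p | p.2 ≤ p.1} Set.univ := by
  constructor
  · intro m n
    simp [G, Nat.add_comm m n, Nat.min_comm]
  · refine ⟨fun p _ => Set.mem_univ _, ?_, ?_⟩
    · -- InjOn
      rintro ⟨m, n⟩ hp ⟨m', n'⟩ hq h
      simp only [Set.mem_setOf_eq] at hp hq
      simp only at h
      rw [G_eq m n hp, G_eq m' n' hq] at h
      have hs : m + n = m' + n' := by
        rcases lt_trichotomy (m + n) (m' + n') with hlt | heq | hgt
        · exfalso
          have h1 : fv (m + n) + n < fv (m + n + 1) := by rw [fv_succ]; omega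
          have h2 : fv (m + n + 1) ≤ fv (m' + n') := fv_strictMono.le_iff_le.mpr hlt
          omega
        · exact heq
        · exfalso
          have h1 : fv (m' + n') + n' < fv (m' + n' + 1) := by rw [fv_succ]; omega
          have h2 : fv (m' + n' + 1) ≤ fv (m + n) := fv_strictMono.le_iff_le.mpr hgt
          omega
      rw [hs] at h
      have hn : n = n' := by omega
      have hm : m = m' := by omega
      simp [hm, hn]
    · -- SurjOn
      have key : ∀ k, ∃ m n : ℕ, n ≤ m ∧ G m n = k := by
        intro k
        induction k with
        | zero => exact ⟨0, 0, le_refl 0, by decide⟩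
        | succ k ih =>
          obtain ⟨m, n, hnm, hG⟩ := ih
          rw [G_eq m n hnm] at hG
          by_cases hc : n + 2 ≤ m
          · refine ⟨m - 1, n + 1, by omega, ?_⟩
            rw [G_eq _ _ (by omega)]
            have : m - 1 + (n + 1) = m + n := by omega
            rw [this]; omega
          · -- m = n or m = n + 1
            refine ⟨m + n + 1, 0, by omega, ?_⟩
            rw [G_eq _ _ (by omega)]
            have : m + n + 1 + 0 = (m + n) + 1 := by omega
            rw [this, fv_succ]
            have : (m + n) / 2 = n := by omega
            omega
      intro k _
      obtain ⟨m, n, hnm, hG⟩ := key k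
      exact ⟨(m, n), hnm, hG⟩
end
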